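/- Let (M, N) define a singular equivalence of Morita type in the sense of Chen-Sun between finite-dimensional k-algebras A and B. If A is self-injective, then B is self-injective. -/

import Mathlib

/-!
`M` is finitely generated projective over the self-injective algebra `A`, hence an injective
`A`-module. As `M` is also projective as a right `B`-module, `Hom_A(M, M)`, with `B` acting
through `M`, is an injective left `B`-module: Baer's criterion comes down to the injectivity of
`M ⊗_B J → M` for a left ideal `J`, which a dual basis of `M_B` provides. Finally `B` is a
`B`-module retract of `Hom_A(M, M)`. Write `N ⊗_A M ≅ B ⊕ Q` as bimodules, with `π` the
projection onto `B` and `t₀` the image of `1`. Since `t₀` commutes with `B`, the map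
`f ↦ π ((id_N ⊗ f) t₀)` is `B`-linear, and it sends `id_M` to `1`.
-/

set_option linter.unusedSectionVars false
set_option maxHeartbeats 1000000
set_option synthInstance.maxHeartbeats 400000

open MulOpposite
open scoped TensorProduct

universe u

noncomputable section

open scoped TensorProduct
open MulOpposite

namespace NC

noncomputable section

universe w v

variable (k : Type w) [CommRing k] (B : Type u) [Ring B]
variable (M N : Type v) [AddCommGroup M] [AddCommGroup N] [Module k M] [Module k N]
variable [Module Bᵐᵒᵖ M] [Module B N]

/-- The defining relations of the balanced tensor product `M ⊗_B N`. -/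
def rel : Submodule k (TensorProduct k M N) :=
  Submodule.span k
    {z | ∃ (b : B) (m : M) (n : N), z = (op b • m) ⊗ₜ[k] n - m ⊗ₜ[k] (b • n)}

/-- The balanced tensor product `M ⊗_B N` of a right `B`-module `M` and a left
`B`-module `N` over the noncommutative ring `B`, as a quotient of `M ⊗[k] N`. -/
def Tensor := TensorProduct k M N ⧸ rel k B M N

instance : AddCommGroup (Tensor k B M N) :=
  inferInstanceAs (AddCommGroup (TensorProduct k M N ⧸ rel k B M N))

instance : Module k (Tensor k B M N) :=
  inferInstanceAs (Module k (TensorProduct k M N ⧸ rel k B M N))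

variable {M N}

/-- The canonical image of `m ⊗ n` in `M ⊗_B N`. -/
def mk (m : M) (n : N) : Tensor k B M N :=
  Submodule.Quotient.mk (m ⊗ₜ[k] n)

lemma mk_balanced (b : B) (m : M) (n : N) : mk k B (op b • m) n = mk k B m (b • n) := by
  rw [mk, mk]
  erw [Submodule.Quotient.eq]
  exact Submodule.subset_span ⟨b, m, n, rfl⟩

lemma mk_add_left (m m' : M) (n : N) : mk k B (m + m') n = mk k B m n + mk k B m' n := by
  simp [mk, TensorProduct.add_tmul, Submodule.Quotient.mk_add]; rfl

lemma mk_add_right (m : M) (n n' : N) : mk k B m (n + n') = mk k B m n + mk k B m n' := by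
  simp [mk, TensorProduct.tmul_add, Submodule.Quotient.mk_add]; rfl

lemma smul_mk_k (c : k) (m : M) (n : N) : c • mk k B m n = mk k B (c • m) n := by
  rw [mk, mk]
  erw [← Submodule.Quotient.mk_smul]
  rw [TensorProduct.smul_tmul']

lemma smul_mk_k' (c : k) (m : M) (n : N) : c • mk k B m n = mk k B m (c • n) := by
  rw [mk, mk, TensorProduct.tmul_smul, Submodule.Quotient.mk_smul]; rfl

lemma mk_zero_left (n : N) : mk k B (0 : M) n = 0 := by
  simp [mk, TensorProduct.zero_tmul]; rfl

lemma mk_zero_right (m : M) : mk k B m (0 : N) = 0 := by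
  simp [mk, TensorProduct.tmul_zero]; rfl

lemma induction_on {p : Tensor k B M N → Prop} (t : Tensor k B M N)
    (zero : p 0) (basic : ∀ m n, p (mk k B m n))
    (add : ∀ x y, p x → p y → p (x + y)) : p t := by
  obtain ⟨x, rfl⟩ := Submodule.Quotient.mk_surjective _ t
  induction x using TensorProduct.induction_on with
  | zero => exact zero
  | tmul m n => exact basic m n
  | add x y hx hy => rw [Submodule.Quotient.mk_add]; exact add _ _ hx hy

section Lift

variable {P : Type v} [AddCommGroup P] [Module k P]

/-- Lift a balanced `k`-bilinear map to the balanced tensor product. -/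
def lift (f : M →ₗ[k] N →ₗ[k] P)
    (hf : ∀ (b : B) (m : M) (n : N), f (op b • m) n = f m (b • n)) :
    Tensor k B M N →ₗ[k] P :=
  Submodule.liftQ _ (TensorProduct.lift f) (by
    rw [rel, Submodule.span_le]
    rintro z ⟨b, m, n, rfl⟩
    simp [LinearMap.mem_ker, hf b m n])

@[simp] lemma lift_mk (f : M →ₗ[k] N →ₗ[k] P) (hf) (m : M) (n : N) :
    lift k B f hf (mk k B m n) = f m n := rfl

end Lift

section LeftAction

variable (A : Type u) [Ring A] [Module A M]
variable [SMulCommClass A Bᵐᵒᵖ M] [SMulCommClass A k M]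

/-- The `k`-linear endomorphism of `M` given by the action of `a : A`. -/
def actL (a : A) : M →ₗ[k] M where
  toFun m := a • m
  map_add' := smul_add a
  map_smul' c m := (smul_comm a c m)

variable (N)

lemma relLe (a : A) :
    rel k B M N ≤ Submodule.comap (LinearMap.rTensor N (actL k A a)) (rel k B M N) := by
  rw [rel, Submodule.span_le]
  rintro z ⟨b, m, n, rfl⟩
  simp only [SetLike.mem_coe, Submodule.mem_comap, map_sub, LinearMap.rTensor_tmul]
  refine Submodule.subset_span ⟨b, a • m, n, ?_⟩
  have h1 : actL k A a (op b • m) = op b • (a • m) := smul_comm a (op b) m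
  have h2 : actL k A a m = a • m := rfl
  rw [h1, h2]

/-- The action of `a : A` on `M ⊗_B N`. -/
def actLQ (a : A) : Tensor k B M N →ₗ[k] Tensor k B M N :=
  Submodule.mapQ _ _ (LinearMap.rTensor N (actL k A a)) (relLe k B N A a)

lemma actLQ_mk (a : A) (m : M) (n : N) :
    actLQ k B N A a (mk k B m n) = mk k B (a • m) n := rfl

/-- The ring homomorphism `A → End_k (M ⊗_B N)` defining the left `A`-module structure. -/
def actLRingHom : A →+* Module.End k (Tensor k B M N) where
  toFun := actLQ k B N A
  map_one' := by
    refine Submodule.linearMap_qext _ (TensorProduct.ext' fun m n => ?_)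
    show actLQ k B N A 1 (mk k B m n) = mk k B m n
    rw [actLQ_mk, one_smul]
  map_mul' x y := by
    refine Submodule.linearMap_qext _ (TensorProduct.ext' fun m n => ?_)
    show actLQ k B N A (x * y) (mk k B m n) = actLQ k B N A x (actLQ k B N A y (mk k B m n))
    rw [actLQ_mk, actLQ_mk, actLQ_mk, mul_smul]
  map_zero' := by
    refine Submodule.linearMap_qext _ (TensorProduct.ext' fun m n => ?_)
    show actLQ k B N A 0 (mk k B m n) = 0
    rw [actLQ_mk, zero_smul, mk_zero_left]
  map_add' x y := by
    refine Submodule.linearMap_qext _ (TensorProduct.ext' fun m n => ?_)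
    show actLQ k B N A (x + y) (mk k B m n)
        = actLQ k B N A x (mk k B m n) + actLQ k B N A y (mk k B m n)
    rw [actLQ_mk, actLQ_mk, actLQ_mk, add_smul, mk_add_left]

variable (M)

/-- The left `A`-module structure on `M ⊗_B N` induced by the left `A`-action on `M`. -/
def leftModule : Module A (Tensor k B M N) :=
  Module.compHom (Tensor k B M N) (actLRingHom k B N A (M := M))

attribute [local instance] leftModule

lemma smul_mk_left (a : A) (m : M) (n : N) :
    a • mk k B m n = mk k B (a • m) n := rfl

instance : SMulCommClass A k (Tensor k B M N) where
  smul_comm a c t := by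
    induction t using induction_on with
    | zero => simp
    | basic m n => rw [smul_mk_k, smul_mk_left, smul_mk_left, smul_mk_k, smul_comm]
    | add x y hx hy => simp [smul_add, hx, hy]

instance : SMulCommClass k A (Tensor k B M N) := SMulCommClass.symm _ _ _

end LeftAction

section RightAction

variable (C : Type u) [Ring C] [Module Cᵐᵒᵖ N]
variable [SMulCommClass Cᵐᵒᵖ B N] [SMulCommClass Cᵐᵒᵖ k N]

/-- The `k`-linear endomorphism of `N` given by the right action of `c : C`. -/
def actR (c : Cᵐᵒᵖ) : N →ₗ[k] N where
  toFun n := c • n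
  map_add' := smul_add c
  map_smul' d n := (smul_comm c d n)

variable (M)

lemma relLeR (c : Cᵐᵒᵖ) :
    rel k B M N ≤ Submodule.comap (LinearMap.lTensor M (actR k C c)) (rel k B M N) := by
  rw [rel, Submodule.span_le]
  rintro z ⟨b, m, n, rfl⟩
  simp only [SetLike.mem_coe, Submodule.mem_comap, map_sub, LinearMap.lTensor_tmul]
  refine Submodule.subset_span ⟨b, m, c • n, ?_⟩
  have h1 : actR k C c (b • n) = b • (c • n) := smul_comm c b n
  have h2 : actR k C c n = c • n := rfl
  rw [h1, h2]

/-- The right action of `c : C` on `M ⊗_B N`. -/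
def actRQ (c : Cᵐᵒᵖ) : Tensor k B M N →ₗ[k] Tensor k B M N :=
  Submodule.mapQ _ _ (LinearMap.lTensor M (actR k C c)) (relLeR k B M C c)

lemma actRQ_mk (c : Cᵐᵒᵖ) (m : M) (n : N) :
    actRQ k B M C c (mk k B m n) = mk k B m (c • n) := rfl

/-- The ring homomorphism `Cᵐᵒᵖ → End_k (M ⊗_B N)` defining the right `C`-module structure. -/
def actRRingHom : Cᵐᵒᵖ →+* Module.End k (Tensor k B M N) where
  toFun := actRQ k B M C
  map_one' := by
    refine Submodule.linearMap_qext _ (TensorProduct.ext' fun m n => ?_)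
    show actRQ k B M C 1 (mk k B m n) = mk k B m n
    rw [actRQ_mk, one_smul]
  map_mul' x y := by
    refine Submodule.linearMap_qext _ (TensorProduct.ext' fun m n => ?_)
    show actRQ k B M C (x * y) (mk k B m n) = actRQ k B M C x (actRQ k B M C y (mk k B m n))
    rw [actRQ_mk, actRQ_mk, actRQ_mk, mul_smul]
  map_zero' := by
    refine Submodule.linearMap_qext _ (TensorProduct.ext' fun m n => ?_)
    show actRQ k B M C 0 (mk k B m n) = 0
    rw [actRQ_mk, zero_smul, mk_zero_right]
  map_add' x y := by
    refine Submodule.linearMap_qext _ (TensorProduct.ext' fun m n => ?_)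
    show actRQ k B M C (x + y) (mk k B m n)
        = actRQ k B M C x (mk k B m n) + actRQ k B M C y (mk k B m n)
    rw [actRQ_mk, actRQ_mk, actRQ_mk, add_smul, mk_add_right]

/-- The right `C`-module structure on `M ⊗_B N` induced by the right `C`-action on `N`. -/
def rightModule : Module Cᵐᵒᵖ (Tensor k B M N) :=
  Module.compHom (Tensor k B M N) (actRRingHom k B M C (N := N))

attribute [local instance] rightModule

lemma smul_mk_right (c : Cᵐᵒᵖ) (m : M) (n : N) :
    c • mk k B m n = mk k B m (c • n) := rfl

instance : SMulCommClass Cᵐᵒᵖ k (Tensor k B M N) where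
  smul_comm c d t := by
    induction t using induction_on with
    | zero => simp
    | basic m n =>
        rw [smul_mk_k, smul_mk_right, smul_mk_right, smul_mk_k]
    | add x y hx hy => simp [smul_add, hx, hy]

instance : SMulCommClass k Cᵐᵒᵖ (Tensor k B M N) := SMulCommClass.symm _ _ _

end RightAction

section Bimodule

variable (A C : Type u) [Ring A] [Ring C] [Module A M] [Module Cᵐᵒᵖ N]
variable [SMulCommClass A Bᵐᵒᵖ M] [SMulCommClass A k M]
variable [SMulCommClass Cᵐᵒᵖ B N] [SMulCommClass Cᵐᵒᵖ k N]

attribute [local instance] leftModule rightModule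

instance : SMulCommClass A Cᵐᵒᵖ (Tensor k B M N) where
  smul_comm a c t := by
    induction t using induction_on with
    | zero => simp
    | basic m n =>
        simp only [smul_mk_right k B M C, smul_mk_left k B M N A]
    | add x y hx hy => simp [smul_add, hx, hy]

section Tower

variable [Algebra k A] [Module k M] [IsScalarTower k A M]

instance : IsScalarTower k A (Tensor k B M N) where
  smul_assoc c a t := by
    induction t using induction_on with
    | zero => simp
    | basic m n =>
        simp only [smul_mk_left k B M N A, smul_mk_k, smul_assoc]
    | add x y hx hy => simp [smul_add, hx, hy]

end Tower

section TowerR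

variable [Algebra k C] [IsScalarTower k Cᵐᵒᵖ N]

instance : IsScalarTower k Cᵐᵒᵖ (Tensor k B M N) where
  smul_assoc c a t := by
    induction t using induction_on with
    | zero => simp
    | basic m n =>
        simp only [smul_mk_right k B M C, smul_mk_k', smul_assoc]
    | add x y hx hy => simp [smul_add, hx, hy]

end TowerR

end Bimodule

end

end NC

/-- `X` has projective dimension at most `n` over `R`. -/
def pdLE (R : Type u) [Ring R] : ℕ → ModuleCat.{u} R → Prop
  | 0, X => Module.Projective R X
  | n+1, X => ∃ (P : ModuleCat.{u} R) (f : P →ₗ[R] X),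
      Module.Projective R P ∧ Function.Surjective f ∧ pdLE R n (ModuleCat.of R (LinearMap.ker f))

/-- `X` has finite projective dimension over `R`. -/
def FinPd (R : Type u) [Ring R] (X : Type u) [AddCommGroup X] [Module R X] : Prop :=
  ∃ n, pdLE R n (ModuleCat.of R X)

universe v w

namespace Module.Injective

variable {R : Type u} [Ring R]

theorem of_retract {E : Type v} {W : Type w} [AddCommGroup E] [Module R E] [AddCommGroup W]
    [Module R W] [Small.{v} R] [Module.Injective R E] (i : W →ₗ[R] E) (r : E →ₗ[R] W)
    (hri : r ∘ₗ i = .id) : Module.Injective R W :=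
  ⟨fun X Y _ _ _ _ f hf g => by
    obtain ⟨h, hh⟩ := extension_property R E X Y f hf (i ∘ₗ g)
    have : r ∘ₗ h ∘ₗ f = g := by rw [hh, ← LinearMap.comp_assoc, hri, LinearMap.id_comp]
    exact ⟨r ∘ₗ h, LinearMap.congr_fun this⟩⟩

theorem of_finite_projective (P : Type v) [AddCommGroup P] [Module R P]
    [Module.Injective R R] [Module.Finite R P] [Module.Projective R P] : Module.Injective R P :=
  have ⟨_, f, g, _, _, hfg⟩ := Module.Finite.exists_comp_eq_id_of_projective R P
  of_retract g f hfg

theorem self_of_apply_eq_one {E : Type v} [AddCommGroup E] [Module R E] [Small.{v} R]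
    [Module.Injective R E] (r : E →ₗ[R] R) (e : E) (hr : r e = 1) : Module.Injective R R :=
  of_retract (LinearMap.toSpanSingleton R E e) r (by ext; simp [hr])

theorem exists_comp_eq_of_ker_le {X M : Type*} {I : Type v} [AddCommGroup X] [Module R X]
    [AddCommGroup M] [Module R M] [AddCommGroup I] [Module R I] [Small.{v} R] [Module.Injective R I]
    (σ : X →ₗ[R] M) (τ : X →ₗ[R] I) (h : LinearMap.ker σ ≤ LinearMap.ker τ) :
    ∃ φ : M →ₗ[R] I, φ ∘ₗ σ = τ := by
  obtain ⟨φ, hφ⟩ := extension_property R I _ _ ((LinearMap.ker σ).liftQ σ le_rfl)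
    (LinearMap.ker_eq_bot.mp (Submodule.ker_liftQ_eq_bot _ _ _ le_rfl))
    ((LinearMap.ker σ).liftQ τ h)
  refine ⟨φ, ?_⟩
  rw [← (LinearMap.ker σ).liftQ_mkQ σ le_rfl, ← LinearMap.comp_assoc, hφ, Submodule.liftQ_mkQ]

end Module.Injective

section HomModule

variable {A B M : Type*} {I : Type v} [Ring A] [Ring B] [AddCommGroup M] [Module A M]
  [Module Bᵐᵒᵖ M] [SMulCommClass A Bᵐᵒᵖ M] [AddCommGroup I] [Module A I]

def homModule : Module B (M →ₗ[A] I) :=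
  Module.compHom (R := (Bᵐᵒᵖ)ᵈᵐᵃ) _ (RingEquiv.opOp B).toRingHom

attribute [local instance] homModule

theorem homModule_smul_apply (b : B) (f : M →ₗ[A] I) (m : M) : (b • f) m = f (op b • m) := rfl

/- With `J →₀ M` presenting `M ⊗_B J`, the left map is the multiplication `M ⊗_B J → M`; the
inclusion comes from a dual basis of the projective module `M_B`. -/
theorem ker_lsum_smul_id_le [Module.Projective Bᵐᵒᵖ M] (J : Ideal B)
    (g : J →ₗ[B] M →ₗ[A] I) :
    LinearMap.ker (Finsupp.lsum ℕ fun j : J => (j : B) • (LinearMap.id : M →ₗ[A] M)) ≤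
      LinearMap.ker (Finsupp.lsum ℕ g) := by
  obtain ⟨s, hs⟩ := Module.projective_def'.mp ‹Module.Projective Bᵐᵒᵖ M›
  -- `κ c` collects the dual-basis coordinates of `σ c`, which lie in `J`
  let κ : (J →₀ M) →+ (M →₀ J) := Finsupp.liftAddHom fun j =>
    (Finsupp.mapRange.addMonoidHom
      (AddMonoidHom.mk' (fun b : Bᵐᵒᵖ => unop b • j) fun _ _ => by simp [add_smul])).comp
      s.toAddMonoidHom
  set σ := Finsupp.lsum ℕ fun j : J => (j : B) • (LinearMap.id : M →ₗ[A] M)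
  have hκ (c : J →₀ M) (y : M) : (κ c y : B) = unop (s (σ c) y) := by
    induction c using Finsupp.induction_linear with
    | zero => simp
    | add c c' hc hc' => simp [hc, hc']
    | single j m =>
      simp only [κ, σ, Finsupp.lsum_single, homModule_smul_apply]
      simp
  have hτ (c : J →₀ M) : Finsupp.lsum ℕ g c = (κ c).sum fun y j => g j y := by
    induction c using Finsupp.induction_linear with
    | zero => simp
    | add c c' hc hc' =>
      rw [map_add, map_add, hc, hc', Finsupp.sum_add_index' (by simp) (by simp)]
    | single j m =>
      rw [Finsupp.lsum_single]
      have hm : Finsupp.linearCombination Bᵐᵒᵖ id (s m) = m := LinearMap.congr_fun hs m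
      conv_lhs => rw [← hm]
      simp [κ, Finsupp.sum_mapRange_index, Finsupp.linearCombination_apply, map_finsuppSum,
        homModule_smul_apply]
  intro c hc
  have hκc : κ c = 0 := by
    ext y
    rw [Finsupp.coe_zero, Pi.zero_apply, ZeroMemClass.coe_zero, hκ, LinearMap.mem_ker.mp hc]
    simp
  rw [LinearMap.mem_ker, hτ, hκc, Finsupp.sum_zero_index]

theorem injective_homModule [Module.Projective Bᵐᵒᵖ M] [Small.{v} A] [Module.Injective A I] :
    Module.Injective B (M →ₗ[A] I) := by
  refine Module.Baer.injective fun J g => ?_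
  obtain ⟨φ, hφ⟩ := Module.Injective.exists_comp_eq_of_ker_le _ _ (ker_lsum_smul_id_le J g)
  refine ⟨LinearMap.toSpanSingleton B _ φ, fun b hb => LinearMap.ext fun m => ?_⟩
  simpa [homModule_smul_apply] using LinearMap.congr_fun hφ (Finsupp.single ⟨b, hb⟩ m)

end HomModule

section LTensor

attribute [local instance] homModule NC.leftModule NC.rightModule

variable {k : Type*} [CommRing k] {A B : Type u} [Ring A] [Algebra k A] [Ring B]
  {M N : Type v} [AddCommGroup M] [Module k M] [Module A M] [IsScalarTower k A M]
  [AddCommGroup N] [Module k N] [Module Aᵐᵒᵖ N]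

def lTensorMap (f : M →ₗ[A] M) : NC.Tensor k A N M →ₗ[k] NC.Tensor k A N M :=
  Submodule.mapQ _ _ (LinearMap.lTensor N (f.restrictScalars k)) <| by
    rw [NC.rel, Submodule.span_le]
    rintro _ ⟨a, n, m, rfl⟩
    exact Submodule.subset_span ⟨a, n, f m, by simp⟩

theorem lTensorMap_id : lTensorMap (k := k) (N := N) (LinearMap.id : M →ₗ[A] M) = LinearMap.id :=
  Submodule.linearMap_qext _ (TensorProduct.ext' fun _ _ => rfl)

theorem lTensorMap_add (f g : M →ₗ[A] M) :
    lTensorMap (k := k) (N := N) (f + g) = lTensorMap f + lTensorMap g :=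
  Submodule.linearMap_qext _ (TensorProduct.ext' fun n m => NC.mk_add_right k A n (f m) (g m))

theorem lTensorMap_apply_smul [Module B N] [SMulCommClass B Aᵐᵒᵖ N] [SMulCommClass B k N]
    (f : M →ₗ[A] M) (b : B) (t : NC.Tensor k A N M) :
    lTensorMap f (b • t) = b • lTensorMap f t := by
  induction t using NC.induction_on with
  | zero => rw [smul_zero, map_zero, smul_zero]
  | basic n m => rfl
  | add x y hx hy => rw [smul_add, map_add, map_add, hx, hy, smul_add]

theorem lTensorMap_smul [Module Bᵐᵒᵖ M] [SMulCommClass A Bᵐᵒᵖ M] [SMulCommClass Bᵐᵒᵖ A M]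
    [SMulCommClass Bᵐᵒᵖ k M] (f : M →ₗ[A] M) (b : B) (t : NC.Tensor k A N M) :
    lTensorMap (b • f) t = lTensorMap f (op b • t) := by
  induction t using NC.induction_on with
  | zero => rw [smul_zero, map_zero, map_zero]
  | basic n m => rfl
  | add x y hx hy => rw [smul_add, map_add, map_add, hx, hy]

theorem exists_linearMap_apply_id_eq_one [Module B N] [SMulCommClass B Aᵐᵒᵖ N]
    [SMulCommClass B k N] [Module Bᵐᵒᵖ M] [SMulCommClass A Bᵐᵒᵖ M] [SMulCommClass Bᵐᵒᵖ A M]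
    [SMulCommClass Bᵐᵒᵖ k M] (π : NC.Tensor k A N M →ₗ[B] B) (t₀ : NC.Tensor k A N M)
    (hπ : π t₀ = 1) (ht₀ : ∀ b : B, op b • t₀ = b • t₀) :
    ∃ r : (M →ₗ[A] M) →ₗ[B] B, r LinearMap.id = 1 :=
  ⟨{ toFun f := π (lTensorMap f t₀)
     map_add' f g := by rw [lTensorMap_add, LinearMap.add_apply, map_add]
     map_smul' b f := by
       rw [lTensorMap_smul, ht₀, lTensorMap_apply_smul, map_smul, RingHom.id_apply] },
   by simp [lTensorMap_id, hπ]⟩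

end LTensor

section BimoduleSummand

attribute [local instance] TensorProduct.Algebra.module

theorem exists_linearMap_central_of_equiv_prod {k B T Q : Type*} [CommRing k] [Ring B]
    [Algebra k B] [AddCommGroup T] [Module k T] [Module B T] [Module Bᵐᵒᵖ T]
    [IsScalarTower k B T] [IsScalarTower k Bᵐᵒᵖ T] [SMulCommClass B Bᵐᵒᵖ T] [AddCommGroup Q]
    [Module (B ⊗[k] Bᵐᵒᵖ) Q] (e : T ≃ₗ[B ⊗[k] Bᵐᵒᵖ] B × Q) :
    ∃ (π : T →ₗ[B] B) (t₀ : T), π t₀ = 1 ∧ ∀ b : B, op b • t₀ = b • t₀ := by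
  have left (b : B) (x : T) : (b ⊗ₜ[k] (1 : Bᵐᵒᵖ)) • x = b • x := by
    rw [TensorProduct.Algebra.smul_def, one_smul]
  have right (b : B) (x : T) : ((1 : B) ⊗ₜ[k] op b) • x = op b • x := by
    rw [TensorProduct.Algebra.smul_def, one_smul]
  refine ⟨{ toFun t := (e t).1, map_add' _ _ := by simp, map_smul' b t := ?_ },
    e.symm (1, 0), by simp, fun b => ?_⟩
  · rw [RingHom.id_apply, ← left, map_smul, Prod.smul_fst, TensorProduct.Algebra.smul_def,
      one_smul]
  · rw [← left, ← right, ← map_smul, ← map_smul]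
    congr 1
    ext <;> simp [TensorProduct.Algebra.smul_def]

end BimoduleSummand

attribute [local instance] NC.leftModule NC.rightModule

section SingEq

variable (k : Type u) [Field k]
variable (A : Type u) [Ring A] [Algebra k A] (B : Type u) [Ring B] [Algebra k B]
variable (M : Type u) [AddCommGroup M] [Module k M] [Module A M] [Module Bᵐᵒᵖ M]
variable [SMulCommClass A Bᵐᵒᵖ M] [IsScalarTower k A M] [IsScalarTower k Bᵐᵒᵖ M]
variable (N : Type u) [AddCommGroup N] [Module k N] [Module B N] [Module Aᵐᵒᵖ N]
variable [SMulCommClass B Aᵐᵒᵖ N] [IsScalarTower k B N] [IsScalarTower k Aᵐᵒᵖ N]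

instance : SMulCommClass Bᵐᵒᵖ A M := SMulCommClass.symm _ _ _
instance : SMulCommClass Aᵐᵒᵖ B N := SMulCommClass.symm _ _ _

/-- The `A ⊗ Aᵒᵖ`-module structure on `A`. -/
def envRegA : Module (A ⊗[k] Aᵐᵒᵖ) A := TensorProduct.Algebra.module

/-- The `B ⊗ Bᵒᵖ`-module structure on `B`. -/
def envRegB : Module (B ⊗[k] Bᵐᵒᵖ) B := TensorProduct.Algebra.module

/-- The `A ⊗ Aᵒᵖ`-module structure on `M ⊗_B N`. -/
def envTensorMN : Module (A ⊗[k] Aᵐᵒᵖ) (NC.Tensor k B M N) :=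
  @TensorProduct.Algebra.module k A Aᵐᵒᵖ _ _ _ (NC.instModuleTensor k B M N) _ _ _ _ _ _ _ _ _

/-- The `B ⊗ Bᵒᵖ`-module structure on `N ⊗_A M`. -/
def envTensorNM : Module (B ⊗[k] Bᵐᵒᵖ) (NC.Tensor k A N M) :=
  @TensorProduct.Algebra.module k B Bᵐᵒᵖ _ _ _ (NC.instModuleTensor k A N M) _ _ _ _ _ _ _ _ _


/-- `(M, N)` defines a singular equivalence of Morita type in the sense of Chen and Sun:
`M` and `N` are bimodules, finitely generated projective on either side, with
`M ⊗_B N ≅ A ⊕ P` as `(A,A)`-bimodules where `P` has finite projective dimension as a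
bimodule, and `N ⊗_A M ≅ B ⊕ Q` as `(B,B)`-bimodules where `Q` has finite projective
dimension as a bimodule. -/
def ChenSun : Prop :=
  Module.Finite A M ∧ Module.Projective A M ∧ Module.Finite Bᵐᵒᵖ M ∧ Module.Projective Bᵐᵒᵖ M ∧
  Module.Finite B N ∧ Module.Projective B N ∧ Module.Finite Aᵐᵒᵖ N ∧ Module.Projective Aᵐᵒᵖ N ∧
  (letI := envTensorMN k A B M N
   letI := envRegA k A
   ∃ (P : ModuleCat.{u} (A ⊗[k] Aᵐᵒᵖ)) (d : ℕ), pdLE (A ⊗[k] Aᵐᵒᵖ) d P ∧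
     Nonempty ((NC.Tensor k B M N) ≃ₗ[A ⊗[k] Aᵐᵒᵖ] (A × P))) ∧
  (letI := envTensorNM k A B M N
   letI := envRegB k B
   ∃ (Q : ModuleCat.{u} (B ⊗[k] Bᵐᵒᵖ)) (d : ℕ), pdLE (B ⊗[k] Bᵐᵒᵖ) d Q ∧
     Nonempty ((NC.Tensor k A N M) ≃ₗ[B ⊗[k] Bᵐᵒᵖ] (B × Q)))

theorem stmt18
    (h : ChenSun k A B M N) (hAinj : Module.Injective A A) :
    Module.Injective B B := by
  obtain ⟨hMfin, hMproj, -, hMprojB, -, -, -, -, -, hB⟩ := h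
  let _ := envTensorNM k A B M N
  let _ := envRegB k B
  obtain ⟨Q, -, -, ⟨e⟩⟩ := hB
  obtain ⟨π, t₀, hπ, ht₀⟩ := exists_linearMap_central_of_equiv_prod e
  obtain ⟨r, hr⟩ := exists_linearMap_apply_id_eq_one π t₀ hπ ht₀
  let _ := homModule (A := A) (B := B) (M := M) (I := M)
  have : Module.Injective A M := .of_finite_projective M
  have : Module.Injective B (M →ₗ[A] M) := injective_homModule
  exact .self_of_apply_eq_one r LinearMap.id hr

end SingEq
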